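/- Let α = s_r s_{r+1} ⋯ s_m ∈ S_n and suppose u →_α w where u has no descents after position m (i.e., u(i) < u(i+1) for all i > m). Then for all j ≥ m + 2, one has u(j-1) < w(j) ≤ u(j). -/

import Mathlib

/-- Number of inversions of `u` among positions `1,…,n` (the Coxeter length
when `u` fixes everything outside `{1,…,n}`). -/
def invLen (n : ℕ) (u : Equiv.Perm ℕ) : ℕ :=
  (((Finset.Icc 1 n) ×ˢ (Finset.Icc 1 n)).filter
    (fun p => p.1 < p.2 ∧ u p.2 < u p.1)).card

/-- The partial products `u · t_{b₁c₁} ⋯ t_{bᵢcᵢ}` (indices of `b`, `c` start at 1). -/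
def partialProd (u : Equiv.Perm ℕ) (b c : ℕ → ℕ) : ℕ → Equiv.Perm ℕ
  | 0 => u
  | (i + 1) => partialProd u b c i * Equiv.swap (b (i + 1)) (c (i + 1))

/-- The sequences `b, c` witness `u →_α w` in `S_n`, where `α = s_r ⋯ s_m` has
length `l = m - r + 1`:  (1) `bᵢ ≤ m < cᵢ` (within `{1,…,n}`);
(2) `w = u t_{b₁c₁} ⋯ t_{b_l c_l}`; (3) each partial product increases the length
by exactly one; (4) the `bᵢ` are distinct. -/
def ArrowWitness (n m l : ℕ) (u w : Equiv.Perm ℕ) (b c : ℕ → ℕ) : Prop :=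
  (∀ i, 1 ≤ i → i ≤ l → 1 ≤ b i ∧ b i ≤ m ∧ m < c i ∧ c i ≤ n) ∧
  w = partialProd u b c l ∧
  (∀ i, 1 ≤ i → i ≤ l → invLen n (partialProd u b c i) = invLen n u + i) ∧
  (∀ i j, 1 ≤ i → i < j → j ≤ l → b i ≠ b j)

/-- The Pieri relation `u →_α w` for `α = s_r s_{r+1} ⋯ s_m`. -/
def PieriArrow (n r m : ℕ) (u w : Equiv.Perm ℕ) : Prop :=
  ∃ b c : ℕ → ℕ, ArrowWitness n m (m - r + 1) u w b c



lemma swap_mem_Icc {n b c x : ℕ} (hb : b ∈ Finset.Icc 1 n) (hc : c ∈ Finset.Icc 1 n)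
    (hx : x ∈ Finset.Icc 1 n) : Equiv.swap b c x ∈ Finset.Icc 1 n := by
  rcases eq_or_ne x b with rfl | h1
  · rwa [Equiv.swap_apply_left]
  rcases eq_or_ne x c with rfl | h2
  · rwa [Equiv.swap_apply_right]
  · rwa [Equiv.swap_apply_of_ne_of_ne h1 h2]

lemma invLen_mul_swap {n b c : ℕ} (hb : b ∈ Finset.Icc 1 n) (hc : c ∈ Finset.Icc 1 n)
    (v : Equiv.Perm ℕ) :
    invLen n (v * Equiv.swap b c) =
    (((Finset.Icc 1 n) ×ˢ (Finset.Icc 1 n)).filter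
      (fun p => Equiv.swap b c p.1 < Equiv.swap b c p.2 ∧ v p.2 < v p.1)).card := by
  unfold invLen
  apply Finset.card_nbij' (fun p => (Equiv.swap b c p.1, Equiv.swap b c p.2))
    (fun p => (Equiv.swap b c p.1, Equiv.swap b c p.2))
  · intro a ha
    rw [Finset.mem_coe, Finset.mem_filter] at ha ⊢
    simp only [Finset.mem_filter, Finset.mem_product, Equiv.Perm.mul_apply] at ha ⊢
    refine ⟨⟨swap_mem_Icc hb hc ha.1.1, swap_mem_Icc hb hc ha.1.2⟩, ?_, ha.2.2⟩
    simpa [Equiv.swap_apply_self] using ha.2.1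
  · intro a ha
    rw [Finset.mem_coe, Finset.mem_filter] at ha ⊢
    simp only [Finset.mem_filter, Finset.mem_product, Equiv.Perm.mul_apply] at ha ⊢
    exact ⟨⟨swap_mem_Icc hb hc ha.1.1, swap_mem_Icc hb hc ha.1.2⟩,
      ha.2.1, by simpa [Equiv.swap_apply_self] using ha.2.2⟩
  · intro a _; simp [Equiv.swap_apply_self]
  · intro a _; simp [Equiv.swap_apply_self]

lemma order_flip {b c a d : ℕ} (hbc : b < c)
    (h1 : Equiv.swap b c a < Equiv.swap b c d) (h2 : d < a) :
    (a = c ∧ d = b) ∨ (d = b ∧ b < a ∧ a < c) ∨ (a = c ∧ b < d ∧ d < c) := by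
  by_cases hab : a = b
  · subst hab
    rw [Equiv.swap_apply_left] at h1
    by_cases hdc : d = c
    · subst hdc; rw [Equiv.swap_apply_right] at h1; omega
    · rw [Equiv.swap_apply_of_ne_of_ne (by omega) hdc] at h1; omega
  by_cases hac : a = c
  · rw [hac, Equiv.swap_apply_right] at h1
    by_cases hdb : d = b
    · omega
    · by_cases hdc : d = c
      · omega
      · rw [Equiv.swap_apply_of_ne_of_ne hdb hdc] at h1; omega
  · rw [Equiv.swap_apply_of_ne_of_ne hab hac] at h1
    by_cases hdb : d = b
    · subst hdb; rw [Equiv.swap_apply_left] at h1; omega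
    by_cases hdc : d = c
    · subst hdc; rw [Equiv.swap_apply_right] at h1; omega
    · rw [Equiv.swap_apply_of_ne_of_ne hdb hdc] at h1; omega

lemma cover_of_step {n : ℕ} (v : Equiv.Perm ℕ) {b c : ℕ} (hb1 : 1 ≤ b) (hbc : b < c)
    (hcn : c ≤ n) (h : invLen n (v * Equiv.swap b c) = invLen n v + 1) :
    v b < v c ∧ ∀ k, b < k → k < c → ¬(v b < v k ∧ v k < v c) := by
  classical
  have hbI : b ∈ Finset.Icc 1 n := by simp; omega
  have hcI : c ∈ Finset.Icc 1 n := by simp; omega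
  rw [invLen_mul_swap hbI hcI] at h
  unfold invLen at h
  set S := (Finset.Icc 1 n) ×ˢ (Finset.Icc 1 n) with hS
  set Qf := S.filter (fun p => Equiv.swap b c p.1 < Equiv.swap b c p.2 ∧ v p.2 < v p.1) with hQf
  set Pf := S.filter (fun p => p.1 < p.2 ∧ v p.2 < v p.1) with hPf
  have hmemQ : ∀ x : ℕ × ℕ, x ∈ Qf ↔
      ((1 ≤ x.1 ∧ x.1 ≤ n) ∧ (1 ≤ x.2 ∧ x.2 ≤ n)) ∧
      Equiv.swap b c x.1 < Equiv.swap b c x.2 ∧ v x.2 < v x.1 := by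
    intro x
    simp [hQf, hS, Finset.mem_filter, Finset.mem_product, Finset.mem_Icc]
  have hmemP : ∀ x : ℕ × ℕ, x ∈ Pf ↔
      ((1 ≤ x.1 ∧ x.1 ≤ n) ∧ (1 ≤ x.2 ∧ x.2 ≤ n)) ∧ x.1 < x.2 ∧ v x.2 < v x.1 := by
    intro x
    simp [hPf, hS, Finset.mem_filter, Finset.mem_product, Finset.mem_Icc]
  -- Part 1 : v b < v c
  have hvbc : v b < v c := by
    by_contra hcon
    have hneq : v c ≠ v b := fun e => absurd (v.injective e) (by omega)
    have hvcb : v c < v b := by omega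
    set f : ℕ × ℕ → ℕ × ℕ :=
      fun p => if p.1 < p.2 then p else if p.2 = b then (p.1, c) else (b, p.2) with hf
    set g : ℕ × ℕ → ℕ × ℕ :=
      fun p => if Equiv.swap b c p.1 < Equiv.swap b c p.2 ∧ v p.2 < v p.1 then p
        else if p.2 = c then (p.1, b) else (c, p.2) with hg
    have hclass : ∀ x ∈ Qf, f x ∈ Pf ∧ g (f x) = x := by
      intro x hx
      rw [hmemQ] at hx
      obtain ⟨⟨⟨h11, h12⟩, h21, h22⟩, hσ, hv⟩ := hx
      by_cases hlt : x.1 < x.2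
      · have hfx : f x = x := by rw [hf]; simp only [if_pos hlt]
        refine ⟨?_, ?_⟩
        · rw [hfx, hmemP]; exact ⟨⟨⟨h11, h12⟩, h21, h22⟩, hlt, hv⟩
        · rw [hfx, hg]; simp only [if_pos (And.intro hσ hv)]
      · have hne : x.1 ≠ x.2 := fun e => by rw [e] at hv; exact lt_irrefl _ hv
        have h2 : x.2 < x.1 := by omega
        rcases order_flip hbc hσ h2 with ⟨e1, e2⟩ | ⟨e2, hba, hac⟩ | ⟨e1, hbd, hdc⟩
        · rw [e1, e2] at hv; omega
        · have hfx : f x = (x.1, c) := by rw [hf]; simp only [if_neg hlt, if_pos e2]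
          have hvx : v c < v x.1 := lt_trans hvcb (e2 ▸ hv)
          refine ⟨?_, ?_⟩
          · rw [hfx, hmemP]; exact ⟨⟨⟨h11, h12⟩, by omega, by omega⟩, hac, hvx⟩
          · rw [hfx, hg]
            have hσ1 : Equiv.swap b c x.1 = x.1 :=
              Equiv.swap_apply_of_ne_of_ne (by omega) (by omega)
            have hσc : Equiv.swap b c c = b := Equiv.swap_apply_right b c
            have hcond : ¬(Equiv.swap b c x.1 < Equiv.swap b c c ∧ v c < v x.1) := by
              rw [hσ1, hσc]; intro hk; omega
            simp only [if_neg hcond, if_pos rfl]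
            rw [← e2]
            simp
        · have hne2b : x.2 ≠ b := by omega
          have hfx : f x = (b, x.2) := by rw [hf]; simp only [if_neg hlt, if_neg hne2b]
          have hvx : v x.2 < v b := lt_trans (e1 ▸ hv) hvcb
          refine ⟨?_, ?_⟩
          · rw [hfx, hmemP]; exact ⟨⟨⟨by omega, by omega⟩, h21, h22⟩, hbd, hvx⟩
          · rw [hfx, hg]
            have hσ2 : Equiv.swap b c x.2 = x.2 :=
              Equiv.swap_apply_of_ne_of_ne (by omega) (by omega)
            have hσb : Equiv.swap b c b = c := Equiv.swap_apply_left b c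
            have hcond : ¬(Equiv.swap b c b < Equiv.swap b c x.2 ∧ v x.2 < v b) := by
              rw [hσ2, hσb]; intro hk; omega
            have hne2c : x.2 ≠ c := by omega
            simp only [if_neg hcond, if_neg hne2c]
            rw [← e1]
    have hle : Qf.card ≤ Pf.card := by
      apply Finset.card_le_card_of_injOn f (fun x hx => (hclass x hx).1)
      intro p hp q hq e
      rw [← (hclass p hp).2, ← (hclass q hq).2, e]
    omega
  refine ⟨hvbc, ?_⟩
  intro k₀ hbk hkc
  rintro ⟨hv1, hv2⟩
  set T : Finset (ℕ × ℕ) := {(c, b), (k₀, b), (c, k₀)} with hT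
  have hσb : Equiv.swap b c b = c := Equiv.swap_apply_left b c
  have hσc : Equiv.swap b c c = b := Equiv.swap_apply_right b c
  have hσk : Equiv.swap b c k₀ = k₀ := Equiv.swap_apply_of_ne_of_ne (by omega) (by omega)
  have hTQ : T ⊆ Qf := by
    intro x hx
    rw [hT] at hx
    simp only [Finset.mem_insert, Finset.mem_singleton] at hx
    rcases hx with rfl | rfl | rfl <;> rw [hmemQ]
    · exact ⟨⟨⟨by omega, by omega⟩, by omega, by omega⟩, by rw [hσb, hσc]; omega, hvbc⟩
    · exact ⟨⟨⟨by omega, by omega⟩, by omega, by omega⟩, by rw [hσb, hσk]; omega, hv1⟩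
    · exact ⟨⟨⟨by omega, by omega⟩, by omega, by omega⟩, by rw [hσc, hσk]; omega, hv2⟩
  have hT3 : T.card = 3 := by
    rw [hT]
    rw [Finset.card_insert_of_notMem (by simp [Prod.ext_iff]; omega),
      Finset.card_insert_of_notMem (by simp [Prod.ext_iff]; omega), Finset.card_singleton]
  set f : ℕ × ℕ → ℕ × ℕ :=
    fun p => if Equiv.swap b c p.1 < Equiv.swap b c p.2 then p
      else if p.1 = b then (c, p.2) else (p.1, b) with hf
  set g : ℕ × ℕ → ℕ × ℕ :=
    fun p => if p.1 < p.2 then p else if p.1 = c then (b, p.2) else (p.1, c) with hg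
  have hclass : ∀ x ∈ Pf, f x ∈ Qf \ T ∧ g (f x) = x := by
    intro x hx
    rw [hmemP] at hx
    obtain ⟨⟨⟨h11, h12⟩, h21, h22⟩, hlt, hv⟩ := hx
    by_cases hσ : Equiv.swap b c x.1 < Equiv.swap b c x.2
    · have hfx : f x = x := by rw [hf]; simp only [if_pos hσ]
      refine ⟨?_, ?_⟩
      · rw [hfx, Finset.mem_sdiff]
        refine ⟨by rw [hmemQ]; exact ⟨⟨⟨h11, h12⟩, h21, h22⟩, hσ, hv⟩, ?_⟩
        rw [hT]
        simp only [Finset.mem_insert, Finset.mem_singleton, Prod.ext_iff]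
        push_neg
        constructor
        · intro e1; omega
        constructor
        · intro e1; omega
        · intro e1; omega
      · rw [hfx, hg]; simp only [if_pos hlt]
    · have hne : Equiv.swap b c x.1 ≠ Equiv.swap b c x.2 :=
        fun e => absurd (Equiv.injective _ e) (by omega)
      have h2 : Equiv.swap b c x.2 < Equiv.swap b c x.1 := by omega
      have h1' : Equiv.swap b c (Equiv.swap b c x.1) < Equiv.swap b c (Equiv.swap b c x.2) := by
        rw [Equiv.swap_apply_self, Equiv.swap_apply_self]; exact hlt
      rcases order_flip hbc h1' h2 with ⟨e1, e2⟩ | ⟨e2, hba, hac⟩ | ⟨e1, hbd, hdc⟩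
      · -- x.1 = b, x.2 = c
        have ex1 : x.1 = b := by
          have := congrArg (Equiv.swap b c) e1; rwa [Equiv.swap_apply_self, hσc] at this
        have ex2 : x.2 = c := by
          have := congrArg (Equiv.swap b c) e2; rwa [Equiv.swap_apply_self, hσb] at this
        rw [ex1, ex2] at hv; omega
      · -- x.2 = c, b < x.1 < c
        have ex2 : x.2 = c := by
          have := congrArg (Equiv.swap b c) e2; rwa [Equiv.swap_apply_self, hσb] at this
        have hx1b : x.1 ≠ b := fun e => by rw [e, hσb] at hba hac; omega
        have hx1c : x.1 ≠ c := fun e => by rw [e, hσc] at hba hac; omega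
        have hσ1 : Equiv.swap b c x.1 = x.1 := Equiv.swap_apply_of_ne_of_ne hx1b hx1c
        rw [hσ1] at hba hac
        have hfx : f x = (x.1, b) := by rw [hf]; simp only [if_neg hσ, if_neg hx1b]
        have hvc1 : v c < v x.1 := ex2 ▸ hv
        refine ⟨?_, ?_⟩
        · rw [hfx, Finset.mem_sdiff]
          constructor
          · rw [hmemQ]
            exact ⟨⟨⟨h11, h12⟩, by omega, by omega⟩, by rw [hσ1, hσb]; omega,
              lt_trans hvbc hvc1⟩
          · rw [hT]
            simp only [Finset.mem_insert, Finset.mem_singleton, Prod.ext_iff]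
            push_neg
            refine ⟨fun e1 => absurd e1 hx1c, fun e1 => ?_, fun e1 => by omega⟩
            rw [e1] at hvc1; omega
        · rw [hfx, hg]
          have : ¬ (x.1 < b) := by omega
          simp only [if_neg this, if_neg hx1c]
          rw [← ex2]
      · -- x.1 = b, b < x.2 < c
        have ex1 : x.1 = b := by
          have := congrArg (Equiv.swap b c) e1; rwa [Equiv.swap_apply_self, hσc] at this
        have hx2b : x.2 ≠ b := fun e => by rw [e, hσb] at hbd hdc; omega
        have hx2c : x.2 ≠ c := fun e => by rw [e, hσc] at hbd hdc; omega
        have hσ2 : Equiv.swap b c x.2 = x.2 := Equiv.swap_apply_of_ne_of_ne hx2b hx2c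
        rw [hσ2] at hbd hdc
        have hfx : f x = (c, x.2) := by rw [hf]; simp only [if_neg hσ, if_pos ex1]
        have hv2b : v x.2 < v b := ex1 ▸ hv
        refine ⟨?_, ?_⟩
        · rw [hfx, Finset.mem_sdiff]
          constructor
          · rw [hmemQ]
            exact ⟨⟨⟨by omega, by omega⟩, h21, h22⟩, by rw [hσc, hσ2]; omega,
              lt_trans hv2b hvbc⟩
          · rw [hT]
            simp only [Finset.mem_insert, Finset.mem_singleton, Prod.ext_iff]
            push_neg
            refine ⟨fun _ => hx2b, fun e1 => by omega, fun _ e2 => ?_⟩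
            rw [e2] at hv2b; omega
        · rw [hfx, hg]
          have hnc : ¬ (c < x.2) := by omega
          simp only [if_neg hnc, if_pos rfl]
          rw [← ex1]
          simp
  have hle : Pf.card ≤ (Qf \ T).card := by
    apply Finset.card_le_card_of_injOn f (fun x hx => (hclass x hx).1)
    intro p hp q hq e
    rw [← (hclass p hp).2, ← (hclass q hq).2, e]
  have hsd : (Qf \ T).card = Qf.card - T.card := Finset.card_sdiff_of_subset hTQ
  have hTle : T.card ≤ Qf.card := Finset.card_le_card hTQ
  omega

/-- The combined invariant carried along the chain of transpositions. -/
def ArrowInv (n m : ℕ) (u : Equiv.Perm ℕ) (b c : ℕ → ℕ) (t : ℕ) : Prop :=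
  (∀ p, 1 ≤ p → p ≤ m → (∀ k, 1 ≤ k → k ≤ t → b k ≠ p) → partialProd u b c t p = u p) ∧
  (∀ k, 1 ≤ k → k ≤ t → partialProd u b c t (b k) = partialProd u b c (k - 1) (c k)) ∧
  (∀ p q, m < p → p < q → q ≤ n → partialProd u b c t p < partialProd u b c t q) ∧
  (∀ p, m < p → p ≤ n → partialProd u b c t p ≤ u p) ∧
  (∀ p, m + 2 ≤ p → p ≤ n → u (p - 1) < partialProd u b c t p) ∧
  (∀ p, m < p → p ≤ n →
    (partialProd u b c t p = u p ∨
      ∃ k, 1 ≤ k ∧ k ≤ t ∧ c k = p ∧ partialProd u b c t p = u (b k)))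

lemma arrow_invariants (n m l : ℕ) (u : Equiv.Perm ℕ) (b c : ℕ → ℕ)
    (hbc1 : ∀ i, 1 ≤ i → i ≤ l → 1 ≤ b i ∧ b i ≤ m ∧ m < c i ∧ c i ≤ n)
    (hbdist : ∀ i j, 1 ≤ i → i < j → j ≤ l → b i ≠ b j)
    (hcov : ∀ t, t + 1 ≤ l →
      (partialProd u b c t) (b (t + 1)) < (partialProd u b c t) (c (t + 1)) ∧
      ∀ k, b (t + 1) < k → k < c (t + 1) →
        ¬((partialProd u b c t) (b (t + 1)) < (partialProd u b c t) k ∧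
          (partialProd u b c t) k < (partialProd u b c t) (c (t + 1))))
    (hdesc : ∀ i, m < i → i + 1 ≤ n → u i < u (i + 1)) :
    ∀ t, t ≤ l → ArrowInv n m u b c t := by
  have humono : ∀ p q, m < p → p < q → q ≤ n → u p < u q := by
    intro p q hp hpq hq
    induction q with
    | zero => omega
    | succ q ih =>
      rcases Nat.lt_or_ge p q with h | h
      · exact lt_trans (ih h (by omega)) (hdesc q (by omega) (by omega))
      · have : p = q := by omega
        subst this
        exact hdesc p hp (by omega)
  intro t
  induction t using Nat.strong_induction_on with
  | _ t IH =>
    match t with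
    | 0 =>
      intro _
      refine ⟨fun p _ _ _ => rfl, fun k hk1 hk2 => by omega, humono,
        fun p _ _ => le_refl _, fun p hp hpn => ?_, fun p _ _ => Or.inl rfl⟩
      · have := hdesc (p - 1) (by omega) (by omega)
        have hh : p - 1 + 1 = p := by omega
        rw [hh] at this
        exact this
    | (t + 1) =>
      intro htl
      obtain ⟨iA, iB, iC, iD, iE, iF⟩ := IH t (by omega) (by omega)
      obtain ⟨hβ1, hβm, hγm, hγn⟩ := hbc1 (t + 1) (by omega) htl
      obtain ⟨hcov1, hcov2⟩ := hcov t htl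
      have happ : ∀ x, partialProd u b c (t + 1) x
          = partialProd u b c t (Equiv.swap (b (t + 1)) (c (t + 1)) x) := fun x => rfl
      have hxne : ∀ x, x ≠ b (t + 1) → x ≠ c (t + 1) →
          partialProd u b c (t + 1) x = partialProd u b c t x := by
        intro x h1 h2
        rw [happ, Equiv.swap_apply_of_ne_of_ne h1 h2]
      have hxβ : partialProd u b c (t + 1) (b (t + 1)) = partialProd u b c t (c (t + 1)) := by
        rw [happ, Equiv.swap_apply_left]
      have hxγ : partialProd u b c (t + 1) (c (t + 1)) = partialProd u b c t (b (t + 1)) := by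
        rw [happ, Equiv.swap_apply_right]
      -- freshness of b (t+1) at all times s ≤ t
      have hfreshβ : ∀ s, s ≤ t → partialProd u b c s (b (t + 1)) = u (b (t + 1)) := by
        intro s hs
        obtain ⟨jA, _, _, _, _, _⟩ := IH s (by omega) (by omega)
        exact jA (b (t + 1)) hβ1 hβm (fun k hk1 hk2 => hbdist k (t + 1) hk1 (by omega) htl)
      have hPtβ : partialProd u b c t (b (t + 1)) = u (b (t + 1)) := hfreshβ t (le_refl t)
      -- (A)
      have nA : ∀ p, 1 ≤ p → p ≤ m →
          (∀ k, 1 ≤ k → k ≤ t + 1 → b k ≠ p) → partialProd u b c (t + 1) p = u p := by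
        intro p h1 h2 h3
        have hpβ : p ≠ b (t + 1) := fun e => h3 (t + 1) (by omega) (le_refl _) e.symm
        have hpγ : p ≠ c (t + 1) := by omega
        rw [hxne p hpβ hpγ]
        exact iA p h1 h2 (fun k hk1 hk2 => h3 k hk1 (by omega))
      -- (B)
      have nB : ∀ k, 1 ≤ k → k ≤ t + 1 →
          partialProd u b c (t + 1) (b k) = partialProd u b c (k - 1) (c k) := by
        intro k hk1 hk2
        rcases Nat.lt_or_ge k (t + 1) with hk | hk
        · have hbne : b k ≠ b (t + 1) := hbdist k (t + 1) hk1 hk htl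
          have hbkm : b k ≤ m := (hbc1 k hk1 (by omega)).2.1
          have hγne : b k ≠ c (t + 1) := by omega
          rw [hxne _ hbne hγne]
          exact iB k hk1 (by omega)
        · have : k = t + 1 := by omega
          subst this
          exact hxβ
      -- (C)
      have nC : ∀ p q, m < p → p < q → q ≤ n →
          partialProd u b c (t + 1) p < partialProd u b c (t + 1) q := by
        intro p q hp hpq hq
        have hpβ : p ≠ b (t + 1) := by omega
        have hqβ : q ≠ b (t + 1) := by omega
        by_cases hqγ : q = c (t + 1)
        · have hpγ : p ≠ c (t + 1) := by omega
          rw [hxne p hpβ hpγ, hqγ, hxγ]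
          have hPpq : partialProd u b c t p < partialProd u b c t (c (t + 1)) :=
            iC p (c (t + 1)) hp (by omega) (by omega)
          have hcv := hcov2 p (by omega) (by omega)
          have hne : partialProd u b c t p ≠ partialProd u b c t (b (t + 1)) :=
            fun e => absurd ((partialProd u b c t).injective e) (by omega)
          omega
        · rw [hxne q hqβ hqγ]
          by_cases hpγ : p = c (t + 1)
          · rw [hpγ, hxγ]
            exact lt_trans hcov1 (iC (c (t + 1)) q (by omega) (by omega) hq)
          · rw [hxne p hpβ hpγ]
            exact iC p q hp hpq hq
      -- (D)
      have nD : ∀ p, m < p → p ≤ n → partialProd u b c (t + 1) p ≤ u p := by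
        intro p hp hpn
        by_cases hpγ : p = c (t + 1)
        · rw [hpγ, hxγ]
          exact le_of_lt (lt_of_lt_of_le hcov1 (iD (c (t + 1)) (by omega) (by omega)))
        · rw [hxne p (by omega) hpγ]
          exact iD p hp hpn
      -- (F)
      have nF : ∀ p, m < p → p ≤ n →
          (partialProd u b c (t + 1) p = u p ∨
            ∃ k, 1 ≤ k ∧ k ≤ t + 1 ∧ c k = p ∧ partialProd u b c (t + 1) p = u (b k)) := by
        intro p hp hpn
        by_cases hpγ : p = c (t + 1)
        · right
          exact ⟨t + 1, by omega, le_refl _, hpγ.symm, by rw [hpγ, hxγ, hPtβ]⟩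
        · rw [hxne p (by omega) hpγ]
          rcases iF p hp hpn with h | ⟨k, hk1, hk2, hk3, hk4⟩
          · exact Or.inl h
          · exact Or.inr ⟨k, hk1, by omega, hk3, hk4⟩
      -- (E) : the crux
      have nE : ∀ p, m + 2 ≤ p → p ≤ n → u (p - 1) < partialProd u b c (t + 1) p := by
        intro p hp hpn
        by_cases hpγ : p = c (t + 1)
        · rw [← hpγ] at hxγ hcov1 hcov2
          rw [hxγ, hPtβ]
          -- goal : u (p - 1) < u (b (t + 1))
          by_contra hcon
          have hβγ1 : b (t + 1) ≠ p - 1 := by omega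
          have hne : u (b (t + 1)) ≠ u (p - 1) := fun e => absurd (u.injective e) hβγ1
          have hlt : u (b (t + 1)) < u (p - 1) := by omega
          have hj'm : m < p - 1 := by omega
          have hj'n : p - 1 ≤ n := by omega
          -- cover at step t+1 applied to p - 1
          have hcovj := hcov2 (p - 1) (by omega) (by omega)
          have hPj'γ : partialProd u b c t (p - 1) < partialProd u b c t p :=
            iC (p - 1) p hj'm (by omega) (by omega)
          have hPj'ne : partialProd u b c t (p - 1) ≠ partialProd u b c t (b (t + 1)) :=
            fun e => absurd ((partialProd u b c t).injective e) (by omega)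
          have hPj'β : partialProd u b c t (p - 1) < u (b (t + 1)) := by
            rw [← hPtβ]; omega
          -- position p - 1 has been hit by an earlier step putting a small value there
          have hex : ∃ k, 1 ≤ k ∧ k ≤ t ∧ c k = p - 1 ∧ u (b k) < u (b (t + 1)) := by
            rcases iF (p - 1) hj'm hj'n with h | ⟨k, hk1, hk2, hk3, hk4⟩
            · rw [h] at hPj'β; omega
            · exact ⟨k, hk1, hk2, hk3, by rw [← hk4]; exact hPj'β⟩
          classical
          have hkspec := Nat.find_spec hex
          have hkmin : ∀ k', k' < Nat.find hex →
              ¬(1 ≤ k' ∧ k' ≤ t ∧ c k' = p - 1 ∧ u (b k') < u (b (t + 1))) :=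
            fun k' h => Nat.find_min hex h
          generalize hkeq : Nat.find hex = k at hkspec hkmin
          obtain ⟨hk1, hkt, hck, hvbk⟩ := hkspec
          -- value sitting at position p-1 just before step k
          have hprev : u (b (t + 1)) < partialProd u b c (k - 1) (p - 1) ∧
              partialProd u b c (k - 1) (p - 1) ≤ u (p - 1) := by
            obtain ⟨_, _, _, jD, _, jF⟩ := IH (k - 1) (by omega) (by omega)
            refine ⟨?_, jD (p - 1) hj'm hj'n⟩
            rcases jF (p - 1) hj'm hj'n with h | ⟨k', hk'1, hk'2, hk'3, hk'4⟩
            · rw [h]; exact hlt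
            · have hnot := hkmin k' (by omega)
              push_neg at hnot
              have hge : u (b (t + 1)) ≤ u (b k') := hnot hk'1 (by omega) hk'3
              have hne' : u (b k') ≠ u (b (t + 1)) := by
                intro e
                exact absurd (u.injective e) (hbdist k' (t + 1) hk'1 (by omega) htl)
              rw [hk'4]
              omega
          have hbkβ : b k ≠ b (t + 1) := hbdist k (t + 1) hk1 (by omega) htl
          have hbk1 : 1 ≤ b k := (hbc1 k hk1 (by omega)).1
          have hbkm : b k ≤ m := (hbc1 k hk1 (by omega)).2.1
          rcases Nat.lt_or_ge (b k) (b (t + 1)) with hlt2 | hge2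
          · -- b k < b (t+1) : contradiction with cover at step k
            obtain ⟨_, covk⟩ := hcov (k - 1) (by omega : (k - 1) + 1 ≤ l)
            have hkk : k - 1 + 1 = k := by omega
            rw [hkk] at covk
            apply covk (b (t + 1)) (by omega) (by omega)
            have hfrbk : partialProd u b c (k - 1) (b k) = u (b k) := by
              obtain ⟨jA, _, _, _, _, _⟩ := IH (k - 1) (by omega) (by omega)
              exact jA (b k) hbk1 hbkm
                (fun k'' h1 h2 => hbdist k'' k h1 (by omega) (by omega))
            have hfrβ : partialProd u b c (k - 1) (b (t + 1)) = u (b (t + 1)) :=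
              hfreshβ (k - 1) (by omega)
            rw [hfrbk, hfrβ, hck]
            exact ⟨hvbk, hprev.1⟩
          · -- b (t+1) < b k : contradiction with cover at step t+1
            have hbkβ' : b (t + 1) < b k := by omega
            apply hcov2 (b k) hbkβ' (by omega)
            have hBk : partialProd u b c t (b k) = partialProd u b c (k - 1) (c k) :=
              iB k hk1 hkt
            rw [hPtβ, hBk, hck]
            refine ⟨hprev.1, ?_⟩
            exact lt_of_le_of_lt hprev.2 (iE p hp hpn)
        · rw [hxne p (by omega) hpγ]
          exact iE p hp hpn
      exact ⟨nA, nB, nC, nD, nE, nF⟩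

theorem arrow_values_bound (n r m : ℕ) (u w : Equiv.Perm ℕ)
    (hr : 1 ≤ r) (hrm : r ≤ m) (hmn : m < n)
    (harrow : PieriArrow n r m u w)
    (hdesc : ∀ i, m < i → i + 1 ≤ n → u i < u (i + 1)) :
    ∀ j, m + 2 ≤ j → j ≤ n → u (j - 1) < w j ∧ w j ≤ u j := by
  obtain ⟨b, c, hbc1, hw, hlen, hbdist⟩ := harrow
  have hcov : ∀ t, t + 1 ≤ m - r + 1 →
      (partialProd u b c t) (b (t + 1)) < (partialProd u b c t) (c (t + 1)) ∧
      ∀ k, b (t + 1) < k → k < c (t + 1) →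
        ¬((partialProd u b c t) (b (t + 1)) < (partialProd u b c t) k ∧
          (partialProd u b c t) k < (partialProd u b c t) (c (t + 1))) := by
    intro t ht
    have h1 : invLen n (partialProd u b c (t + 1)) = invLen n u + (t + 1) :=
      hlen (t + 1) (by omega) ht
    have h0 : invLen n (partialProd u b c t) = invLen n u + t := by
      rcases Nat.eq_zero_or_pos t with rfl | hpos
      · rfl
      · exact hlen t (by omega) (by omega)
    obtain ⟨hb1, hbm, hmc, hcn⟩ := hbc1 (t + 1) (by omega) ht
    have hkey : invLen n (partialProd u b c t * Equiv.swap (b (t + 1)) (c (t + 1)))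
        = invLen n (partialProd u b c t) + 1 := by
      have : partialProd u b c (t + 1)
          = partialProd u b c t * Equiv.swap (b (t + 1)) (c (t + 1)) := rfl
      rw [← this]
      omega
    exact cover_of_step (partialProd u b c t) hb1 (by omega) hcn hkey
  obtain ⟨_, _, _, hD, hE, _⟩ :=
    arrow_invariants n m (m - r + 1) u b c hbc1 hbdist hcov hdesc (m - r + 1) (le_refl _)
  intro j hj1 hj2
  rw [hw]
  exact ⟨hE j hj1 hj2, hD j (by omega) hj2⟩
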